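/- For a finite simple graph G with at least one edge, μ^{(p)}(G) converges to μ^{(∞)}(G) as p → ∞, where μ^{(∞)}(G) = max_{‖x‖_∞ = 1} ∑_{ij∈E}(x_i - x_j)^2. -/

import Mathlib

open scoped Classical
open Finset

/-- The `p`-norm of a vector. -/
noncomputable def pNorm {V : Type*} [Fintype V] (p : ℝ) (x : V → ℝ) : ℝ :=
  (∑ i, |x i| ^ p) ^ (1 / p)

/-- The sup-norm of a vector. -/
noncomputable def supNorm {V : Type*} [Fintype V] (x : V → ℝ) : ℝ :=
  ⨆ i, |x i|

/-- The Laplacian quadratic form `∑_{ij ∈ E} (x_i - x_j)^2` of a graph. -/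
noncomputable def quadForm {V : Type*} [Fintype V] (G : SimpleGraph V) (x : V → ℝ) : ℝ :=
  (∑ i, ∑ j, if G.Adj i j then (x i - x j) ^ 2 else 0) / 2

/-- The `p`-spectral radius of the Laplacian: `μ⁽ᵖ⁾(G) = max_{‖x‖ₚ = 1} xᵀLx`. -/
noncomputable def mu {V : Type*} [Fintype V] (G : SimpleGraph V) (p : ℝ) : ℝ :=
  sSup {y | ∃ x : V → ℝ, pNorm p x = 1 ∧ quadForm G x = y}

/-- `μ⁽^∞⁾(G) = max_{‖x‖_∞ = 1} xᵀLx`. -/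
noncomputable def muInf {V : Type*} [Fintype V] (G : SimpleGraph V) : ℝ :=
  sSup {y | ∃ x : V → ℝ, supNorm x = 1 ∧ quadForm G x = y}

/-!
For `p > 0` the norms compare as `‖x‖_∞ ≤ ‖x‖_p ≤ |V|^{1/p} ‖x‖_∞`. Since the quadratic form is
homogeneous of degree two, this gives `μ⁽ᵖ⁾(G) ≤ μ⁽^∞⁾(G) ≤ |V|^{2/p} μ⁽ᵖ⁾(G)`, and
`|V|^{2/p} → 1` as `p → ∞`.
-/

section Norms

variable {V : Type*} [Fintype V]

lemma abs_le_supNorm (x : V → ℝ) (i : V) : |x i| ≤ supNorm x :=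
  le_ciSup (f := fun j => |x j|) (Set.finite_range _).bddAbove i

lemma supNorm_nonneg (x : V → ℝ) : 0 ≤ supNorm x :=
  Real.iSup_nonneg fun i => abs_nonneg (x i)

lemma supNorm_smul {c : ℝ} (hc : 0 ≤ c) (x : V → ℝ) : supNorm (c • x) = c * supNorm x := by
  simp only [supNorm, Pi.smul_apply, smul_eq_mul, abs_mul, abs_of_nonneg hc]
  exact (Real.mul_iSup_of_nonneg hc _).symm

lemma pNorm_smul {p : ℝ} (hp : 0 < p) {c : ℝ} (hc : 0 ≤ c) (x : V → ℝ) :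
    pNorm p (c • x) = c * pNorm p x := by
  have hsum : 0 ≤ ∑ i, |x i| ^ p := sum_nonneg fun i _ => by positivity
  simp only [pNorm, Pi.smul_apply, smul_eq_mul, abs_mul, abs_of_nonneg hc,
    Real.mul_rpow hc (abs_nonneg _), ← mul_sum]
  rw [Real.mul_rpow (by positivity) hsum, one_div, Real.rpow_rpow_inv hc hp.ne']

lemma supNorm_le_pNorm {p : ℝ} (hp : 0 < p) (x : V → ℝ) : supNorm x ≤ pNorm p x := by
  have hsum : 0 ≤ ∑ i, |x i| ^ p := sum_nonneg fun i _ => by positivity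
  refine Real.iSup_le (fun i => ?_) (by unfold pNorm; positivity)
  calc |x i| = (|x i| ^ p) ^ (1 / p) := by
        rw [one_div, Real.rpow_rpow_inv (abs_nonneg _) hp.ne']
    _ ≤ pNorm p x :=
        Real.rpow_le_rpow (by positivity)
          (single_le_sum (f := fun j => |x j| ^ p) (fun j _ => by positivity) (mem_univ i)) (by positivity)

lemma pNorm_le_card_rpow_mul_supNorm {p : ℝ} (hp : 0 < p) (x : V → ℝ) :
    pNorm p x ≤ (Fintype.card V : ℝ) ^ (1 / p) * supNorm x := by
  have hs := supNorm_nonneg x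
  have hsum : ∑ i, |x i| ^ p ≤ Fintype.card V * supNorm x ^ p := by
    simpa using sum_le_sum fun i (_ : i ∈ univ) =>
      Real.rpow_le_rpow (abs_nonneg _) (abs_le_supNorm x i) hp.le
  calc pNorm p x ≤ (Fintype.card V * supNorm x ^ p) ^ (1 / p) :=
        Real.rpow_le_rpow (sum_nonneg fun i _ => by positivity) hsum (by positivity)
    _ = (Fintype.card V : ℝ) ^ (1 / p) * supNorm x := by
        rw [Real.mul_rpow (by positivity) (by positivity), one_div,
          Real.rpow_rpow_inv hs hp.ne']

end Norms

section QuadForm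

variable {V : Type*} [Fintype V] (G : SimpleGraph V)

lemma quadForm_nonneg (x : V → ℝ) : 0 ≤ quadForm G x := by
  unfold quadForm
  refine div_nonneg (sum_nonneg fun i _ => sum_nonneg fun j _ => ?_) zero_le_two
  split <;> positivity

lemma quadForm_smul (c : ℝ) (x : V → ℝ) : quadForm G (c • x) = c ^ 2 * quadForm G x := by
  simp only [quadForm, mul_div_assoc', mul_sum]
  congr 1
  refine sum_congr rfl fun i _ => sum_congr rfl fun j _ => ?_
  split
  · simp only [Pi.smul_apply, smul_eq_mul]
    ring
  · rw [mul_zero]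

lemma quadForm_le_card_sq_mul_supNorm_sq (x : V → ℝ) :
    quadForm G x ≤ 2 * (Fintype.card V : ℝ) ^ 2 * supNorm x ^ 2 := by
  have hterm : ∀ i j, (if G.Adj i j then (x i - x j) ^ 2 else 0) ≤ 4 * supNorm x ^ 2 := by
    intro i j
    have hi := abs_le.1 (abs_le_supNorm x i)
    have hj := abs_le.1 (abs_le_supNorm x j)
    split
    · nlinarith
    · positivity
  have hsum := sum_le_sum fun i (_ : i ∈ univ) => sum_le_sum fun j (_ : j ∈ univ) => hterm i j
  simp only [sum_const, card_univ, nsmul_eq_mul] at hsum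
  unfold quadForm
  linarith

lemma bddAbove_quadForm_of_supNorm_le {N : (V → ℝ) → ℝ} (hN : ∀ x, supNorm x ≤ N x) :
    BddAbove {y | ∃ x, N x = 1 ∧ quadForm G x = y} := by
  refine ⟨2 * (Fintype.card V : ℝ) ^ 2, ?_⟩
  rintro _ ⟨x, hx, rfl⟩
  have h0 := supNorm_nonneg x
  have h1 : supNorm x ≤ 1 := hx ▸ hN x
  calc quadForm G x ≤ 2 * (Fintype.card V : ℝ) ^ 2 * supNorm x ^ 2 :=
        quadForm_le_card_sq_mul_supNorm_sq G x
    _ ≤ 2 * (Fintype.card V : ℝ) ^ 2 := by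
        have : supNorm x ^ 2 ≤ 1 := pow_le_one₀ h0 h1
        nlinarith [sq_nonneg (Fintype.card V : ℝ)]

lemma quadForm_le_sq_mul_sSup {N : (V → ℝ) → ℝ} (hN : ∀ (c : ℝ) x, 0 ≤ c → N (c • x) = c * N x)
    (hbdd : BddAbove {y | ∃ x, N x = 1 ∧ quadForm G x = y}) {x : V → ℝ} (hx : 0 < N x) :
    quadForm G x ≤ N x ^ 2 * sSup {y | ∃ x, N x = 1 ∧ quadForm G x = y} := by
  have hunit : N ((N x)⁻¹ • x) = 1 := by
    rw [hN _ _ (inv_nonneg.2 hx.le), inv_mul_cancel₀ hx.ne']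
  calc quadForm G x = N x ^ 2 * quadForm G ((N x)⁻¹ • x) := by
        rw [quadForm_smul, ← mul_assoc, ← mul_pow, mul_inv_cancel₀ hx.ne', one_pow, one_mul]
    _ ≤ N x ^ 2 * sSup {y | ∃ x, N x = 1 ∧ quadForm G x = y} :=
        mul_le_mul_of_nonneg_left (le_csSup hbdd ⟨_, hunit, rfl⟩) (sq_nonneg _)

end QuadForm

section Spectral

variable {V : Type*} [Fintype V] (G : SimpleGraph V)

lemma mu_nonneg (p : ℝ) : 0 ≤ mu G p :=
  Real.sSup_nonneg fun _ ⟨x, _, hy⟩ => hy ▸ quadForm_nonneg G x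

lemma muInf_nonneg : 0 ≤ muInf G :=
  Real.sSup_nonneg fun _ ⟨x, _, hy⟩ => hy ▸ quadForm_nonneg G x

lemma quadForm_le_pNorm_sq_mul_mu {p : ℝ} (hp : 0 < p) {x : V → ℝ} (hx : 0 < pNorm p x) :
    quadForm G x ≤ pNorm p x ^ 2 * mu G p :=
  quadForm_le_sq_mul_sSup G (fun _ x hc => pNorm_smul hp hc x)
    (bddAbove_quadForm_of_supNorm_le G (supNorm_le_pNorm hp)) hx

lemma quadForm_le_supNorm_sq_mul_muInf {x : V → ℝ} (hx : 0 < supNorm x) :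
    quadForm G x ≤ supNorm x ^ 2 * muInf G :=
  quadForm_le_sq_mul_sSup G (fun _ x hc => supNorm_smul hc x)
    (bddAbove_quadForm_of_supNorm_le G fun _ => le_rfl) hx

lemma mu_le_muInf {p : ℝ} (hp : 0 < p) : mu G p ≤ muInf G := by
  refine Real.sSup_le ?_ (muInf_nonneg G)
  rintro _ ⟨x, hx, rfl⟩
  have hle : supNorm x ≤ 1 := hx ▸ supNorm_le_pNorm hp x
  have hpos : 0 < supNorm x := by
    by_contra! h
    have := pNorm_le_card_rpow_mul_supNorm hp x
    rw [le_antisymm h (supNorm_nonneg x), mul_zero, hx] at this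
    exact one_pos.not_ge this
  calc quadForm G x ≤ supNorm x ^ 2 * muInf G := quadForm_le_supNorm_sq_mul_muInf G hpos
    _ ≤ muInf G :=
        mul_le_of_le_one_left (muInf_nonneg G) (pow_le_one₀ hpos.le hle)

lemma muInf_le_card_rpow_mul_mu {p : ℝ} (hp : 0 < p) :
    muInf G ≤ (Fintype.card V : ℝ) ^ (2 / p) * mu G p := by
  refine Real.sSup_le ?_ (mul_nonneg (by positivity) (mu_nonneg G p))
  rintro _ ⟨x, hx, rfl⟩
  have hge : 1 ≤ pNorm p x := hx ▸ supNorm_le_pNorm hp x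
  have hle : pNorm p x ^ 2 ≤ (Fintype.card V : ℝ) ^ (2 / p) := by
    have := pNorm_le_card_rpow_mul_supNorm hp x
    rw [hx, mul_one] at this
    calc pNorm p x ^ 2 ≤ ((Fintype.card V : ℝ) ^ (1 / p)) ^ 2 := by gcongr
      _ = (Fintype.card V : ℝ) ^ (2 / p) := by
        rw [← Real.rpow_mul_natCast (by positivity)]
        ring_nf
  calc quadForm G x ≤ pNorm p x ^ 2 * mu G p :=
        quadForm_le_pNorm_sq_mul_mu G hp (by linarith)
    _ ≤ (Fintype.card V : ℝ) ^ (2 / p) * mu G p :=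
        mul_le_mul_of_nonneg_right hle (mu_nonneg G p)

end Spectral

lemma tendsto_rpow_div_atTop_nhds_one {a : ℝ} (ha : 0 < a) (b : ℝ) :
    Filter.Tendsto (fun p : ℝ => a ^ (b / p)) Filter.atTop (nhds 1) := by
  have h := (Real.continuousAt_const_rpow ha.ne').tendsto.comp
    (tendsto_const_nhds.div_atTop Filter.tendsto_id : Filter.Tendsto (fun p : ℝ => b / p) _ _)
  simpa [Function.comp_def] using h

theorem mu_tendsto_muInf {n : ℕ} (G : SimpleGraph (Fin n)) (hE : ∃ a b, G.Adj a b) :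
    Filter.Tendsto (fun p => mu G p) Filter.atTop (nhds (muInf G)) := by
  obtain ⟨a, -, -⟩ := hE
  have hcard : (0 : ℝ) < Fintype.card (Fin n) := by
    simpa using Fin.pos a
  have hlower : Filter.Tendsto (fun p : ℝ => muInf G / (Fintype.card (Fin n) : ℝ) ^ (2 / p))
      Filter.atTop (nhds (muInf G)) := by
    simpa [Pi.div_def] using tendsto_const_nhds.div (tendsto_rpow_div_atTop_nhds_one hcard 2) one_ne_zero
  refine tendsto_of_tendsto_of_tendsto_of_le_of_le' hlower tendsto_const_nhds ?_ ?_
  all_goals filter_upwards [Filter.eventually_gt_atTop 0] with p hp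
  · rw [div_le_iff₀' (Real.rpow_pos_of_pos hcard _)]
    exact muInf_le_card_rpow_mul_mu G hp
  · exact mu_le_muInf G hp
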